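/- C(1) = 1; that is, ∏_{p prime, p > 2}(1 − 1/(p−1)^2) · ∏_{p prime}(1 + f_1(p)) = 1. -/

import Mathlib

open scoped BigOperators Classical

noncomputable section

/-- Number of points (including the point at infinity) of the curve
`y² = x³ + s·x + t` over `ZMod p`. -/
def curvePoints (p : ℕ) (s t : ZMod p) : ℕ :=
  1 + Nat.card {xy : ZMod p × ZMod p // xy.2 ^ 2 = xy.1 ^ 3 + s * xy.1 + t}

/-- `M_{E_{a,b}}(N)`: the number of primes `p > 3` of good reduction such that the reduction
of `E_{a,b}` mod `p` has exactly `N` points. -/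
def ME (a b : ℤ) (N : ℕ) : ℕ :=
  Nat.card {p : ℕ // p.Prime ∧ 3 < p ∧ ¬ ((p : ℤ) ∣ (4 * a ^ 3 + 27 * b ^ 2)) ∧
    curvePoints p (a : ZMod p) (b : ZMod p) = N}

/-- The family `C(A,B)` of integral pairs `(a,b)` with `|a| ≤ A`, `|b| ≤ B`,
`4a³ + 27b² ≠ 0`. -/
def curveBox (A B : ℝ) : Finset (ℤ × ℤ) :=
  (Finset.Icc ⌈-A⌉ ⌊A⌋ ×ˢ Finset.Icc ⌈-B⌉ ⌊B⌋).filter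
    fun ab => 4 * ab.1 ^ 3 + 27 * ab.2 ^ 2 ≠ 0

/-- The weighted class number `H_N(p)`. -/
def HN (N p : ℕ) : ℝ :=
  (Nat.card {st : ZMod p × ZMod p // 4 * st.1 ^ 3 + 27 * st.2 ^ 2 ≠ 0 ∧
    curvePoints p st.1 st.2 = N} : ℝ) / ((p : ℝ) - 1)

/-- Primes in the Hasse interval `(N⁻, N⁺) = ((√N - 1)², (√N + 1)²)`. -/
def primesRange (N : ℕ) : Set ℕ :=
  {p : ℕ | p.Prime ∧ (Real.sqrt N - 1) ^ 2 < (p : ℝ) ∧ (p : ℝ) < (Real.sqrt N + 1) ^ 2}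

/-- `ε_p(N)`: `1` if `p ∤ N - 1`, `0` if `p ∣ N - 1`. -/
def eps (p N : ℕ) : ℝ := if p ∣ (N - 1) then 0 else 1

/-- The Euler factor constant `K(N)`. -/
def Kconst (N : ℕ) : ℝ :=
  (∏' p : {p : ℕ // p.Prime ∧ ¬ p ∣ N},
    (1 - (eps (p : ℕ) N * ((p : ℕ) : ℝ) + 1) /
      ((((p : ℕ) : ℝ) - 1) ^ 2 * (((p : ℕ) : ℝ) + 1)))) *
  ∏ p ∈ N.primeFactors, (1 - 1 / ((p : ℝ) ^ (N.factorization p) * ((p : ℝ) - 1)))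

/-- The local factor `f_m(p)`. -/
def fm (m : ℕ) (p : ℕ) : ℝ :=
  if p = 2 then
    (1 / 2) * ((2 / 3 : ℝ) ^ m - 1) +
      2 ^ m * ∑' j : ℕ, (1 / 2 ^ (j + 2) : ℝ) *
        ((1 - 1 / 2 ^ (j + 2)) ^ m - (1 - 1 / 2 ^ (j + 1)) ^ m)
  else
    (1 / (p : ℝ)) *
      ((1 - 1 / ((p : ℝ) - 1) ^ 2)⁻¹ ^ m *
        ((1 - 1 / (((p : ℝ) - 1) ^ 2 * ((p : ℝ) + 1))) ^ m +
          ((p : ℝ) / ((p : ℝ) - 1)) ^ m * (1 - 1 / ((p : ℝ) * ((p : ℝ) - 1))) ^ m) - 2) +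
    ((p : ℝ) / ((p : ℝ) - 1)) ^ m * ((1 - 1 / ((p : ℝ) - 1) ^ 2)⁻¹) ^ m *
      ∑' j : ℕ, (1 / (p : ℝ) ^ (j + 2)) *
        ((1 - 1 / ((p : ℝ) ^ (j + 2) * ((p : ℝ) - 1))) ^ m -
         (1 - 1 / ((p : ℝ) ^ (j + 1) * ((p : ℝ) - 1))) ^ m)

/-- The constant `C(m)`. -/
def Cconst (m : ℕ) : ℝ :=
  (∏' p : {p : ℕ // p.Prime ∧ 2 < p}, (1 - 1 / (((p : ℕ) : ℝ) - 1) ^ 2) ^ m) *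
  ∏' p : {p : ℕ // p.Prime}, (1 + fm m (p : ℕ))

/-- The combinatorial coefficients `d_{ℓ,r}(m)`. -/
def dconst (l r m : ℕ) : ℝ :=
  ∑ k ∈ Finset.Icc l m, ((k : ℝ) ^ r / k.factorial) * ((-1 : ℝ) ^ (m - k) / (m - k).factorial)

/-- The logarithmic integral `Li_m(x) = ∫_2^x dt/(log t)^m`. -/
def Li (m : ℕ) (x : ℝ) : ℝ := ∫ t in (2 : ℝ)..x, 1 / (Real.log t) ^ m

/-- Chebyshev `θ(x; q, a)` for primes in an arithmetic progression. -/
def theta (x : ℝ) (q a : ℕ) : ℝ :=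
  ∑ᶠ p ∈ {p : ℕ | p.Prime ∧ (p : ℝ) ≤ x ∧ p % q = a % q}, Real.log p

/-- The Barban–Davenport–Halberstam hypothesis `BDH(η, β)`. -/
def BDH (η β : ℝ) : Prop :=
  ∃ c : ℝ, ∀ X Y Q : ℝ, 0 < X → 0 < Y → 0 < Q →
    X ^ η ≤ Y → Y ≤ X → Y / Real.log X ^ β ≤ Q → Q ≤ Y →
    ∑ q ∈ Finset.Icc 1 ⌊Q⌋₊, ∑ a ∈ (Finset.Icc 1 q).filter (fun a => Nat.gcd a q = 1),
      |theta (X + Y) q a - theta X q a - Y / (Nat.totient q : ℝ)| ^ 2 ≤ c * Y * Q * Real.log X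

end

/-! For odd `p` the series in `f₁(p)` is geometric, and summing it shows that `1 + f₁(p)` is
exactly the inverse of the Euler factor `1 - 1/(p-1)²`; moreover `f₁(2) = 0`. Hence the
second product in `C(1)` is the first one inverted, and the two cancel: both converge
absolutely, their factors being `1 + O(p⁻²)`. -/

open Real

theorem tsum_one_div_pow_mul_sub {x : ℝ} (hx : 1 < x) (c : ℝ) :
    ∑' j : ℕ, 1 / x ^ (j + 2) * ((1 - 1 / (x ^ (j + 2) * c)) - (1 - 1 / (x ^ (j + 1) * c)))
      = 1 / (c * x ^ 2 * (x + 1)) := by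
  have hx0 : x ≠ 0 := by positivity
  have hterm : ∀ j : ℕ,
      1 / x ^ (j + 2) * ((1 - 1 / (x ^ (j + 2) * c)) - (1 - 1 / (x ^ (j + 1) * c)))
        = (x - 1) / (c * x ^ 4) * (1 / x ^ 2) ^ j := by
    intro j
    rw [one_div_pow, ← pow_mul]
    rcases eq_or_ne c 0 with rfl | hc
    · simp
    · field_simp
      ring
  have hratio : 1 / x ^ 2 < 1 := by
    rw [div_lt_one (by positivity)]
    nlinarith
  rw [tsum_congr hterm, tsum_mul_left, tsum_geometric_of_lt_one (by positivity) hratio]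
  rcases eq_or_ne c 0 with rfl | hc
  · simp
  · have hx1 : x - 1 ≠ 0 := by linarith
    have hx2 : x + 1 ≠ 0 := by linarith
    have hxsq : x ^ 2 - 1 ≠ 0 := by nlinarith
    field_simp
    ring

theorem fm_one_two : fm 1 2 = 0 := by
  have hsum := tsum_one_div_pow_mul_sub one_lt_two (1 : ℝ)
  simp only [mul_one] at hsum
  rw [fm, if_pos rfl]
  simp only [pow_one]
  rw [hsum]
  norm_num

theorem one_sub_one_div_sq_pos {x : ℝ} (hx : 2 < x) : 0 < 1 - 1 / (x - 1) ^ 2 := by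
  rw [sub_pos, div_lt_one (by nlinarith)]
  nlinarith

theorem one_add_fm_one_of_two_lt {p : ℕ} (hp : 2 < p) :
    1 + fm 1 p = (1 - 1 / ((p : ℝ) - 1) ^ 2)⁻¹ := by
  have hx : (2 : ℝ) < p := by exact_mod_cast hp
  have hg := (one_sub_one_div_sq_pos hx).ne'
  rw [fm, if_neg hp.ne']
  simp only [pow_one]
  rw [tsum_one_div_pow_mul_sub (by linarith) ((p : ℝ) - 1)]
  have hx1 : (p : ℝ) - 1 ≠ 0 := by linarith
  have hx2 : (p : ℝ) - 2 ≠ 0 := by linarith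
  have hx0 : (p : ℝ) ≠ 0 := by linarith
  have hinv : (1 - 1 / ((p : ℝ) - 1) ^ 2)⁻¹ = ((p : ℝ) - 1) ^ 2 / (p * (p - 2)) := by
    rw [← one_div, div_eq_div_iff hg (mul_ne_zero hx0 hx2)]
    field_simp
    ring
  rw [hinv]
  field_simp
  ring

theorem summable_one_div_natCast_sub_one_sq :
    Summable fun n : ℕ => 1 / ((n : ℝ) - 1) ^ 2 := by
  refine ((Real.summable_one_div_nat_add_rpow (-1) 2).2 one_lt_two).congr fun n => ?_
  rw [Real.rpow_two, sq_abs, ← sub_eq_add_neg]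

theorem tprod_mul_tprod_inv_of_summable_log {ι : Type*} {f : ι → ℝ} (hf : ∀ i, 0 < f i)
    (hlog : Summable fun i => log (f i)) : (∏' i, f i) * ∏' i, (f i)⁻¹ = 1 := by
  have hlog_inv : Summable fun i => log (f i)⁻¹ := by simpa only [log_inv] using hlog.neg
  rw [← rexp_tsum_eq_tprod hf hlog, ← rexp_tsum_eq_tprod (fun i => inv_pos.2 (hf i)) hlog_inv,
    ← exp_add, ← hlog.tsum_add hlog_inv]
  simp

theorem summable_log_one_sub_one_div_sq_odd_primes :
    Summable fun p : {p : ℕ // p.Prime ∧ 2 < p} => log (1 - 1 / ((p : ℝ) - 1) ^ 2) := by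
  refine (Real.summable_log_one_add_of_summable
    (summable_one_div_natCast_sub_one_sq.subtype {p : ℕ | p.Prime ∧ 2 < p}).neg).congr fun p => ?_
  rw [← sub_eq_add_neg]
  rfl

theorem tprod_primes_eq_tprod_odd_primes {α : Type*} [CommMonoid α] [TopologicalSpace α]
    {f : ℕ → α} (h2 : f 2 = 1) :
    ∏' p : {p : ℕ // p.Prime}, f p = ∏' p : {p : ℕ // p.Prime ∧ 2 < p}, f p := by
  have hindicator : {p | p.Prime}.mulIndicator f = {p | p.Prime ∧ 2 < p}.mulIndicator f := by
    funext n
    by_cases hn : n = 2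
    · simp [hn, h2]
    · have hodd : n.Prime → 2 < n := fun hp => hp.two_le.lt_of_ne' hn
      simp only [Set.mulIndicator_apply, Set.mem_ofPred_eq, and_iff_left_of_imp hodd]
  exact (tprod_subtype _ f).trans (hindicator ▸ (tprod_subtype _ f).symm)

theorem Cconst_one : Cconst 1 = 1 := by
  have hpos (p : {p : ℕ // p.Prime ∧ 2 < p}) : 0 < 1 - 1 / ((p : ℝ) - 1) ^ 2 :=
    one_sub_one_div_sq_pos (by exact_mod_cast p.2.2)
  rw [Cconst, tprod_primes_eq_tprod_odd_primes (f := fun p => 1 + fm 1 p) (by simp [fm_one_two])]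
  simp only [pow_one, tprod_congr fun p : {p : ℕ // p.Prime ∧ 2 < p} =>
    one_add_fm_one_of_two_lt p.2.2]
  exact tprod_mul_tprod_inv_of_summable_log hpos summable_log_one_sub_one_div_sq_odd_primes
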